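/- Assume the training data is noiseless, i.e. Y = G·P, and let α > 0, β > 0. Define the linear model-constrained encoder (mcEncoder) loss J(We, be, Wd, bd) = (1/2)·‖Y − Wd·(We·Y + be·𝟙ᵀ) − bd·𝟙ᵀ‖² + (α/2)·‖P − We·Y − be·𝟙ᵀ‖² + (β/2)·‖Y − G·We·Y − G·be·𝟙ᵀ‖², for We ∈ ℝ^{m×n}, be ∈ ℝ^m, Wd ∈ ℝ^{n×m}, bd ∈ ℝ^n. Then there exists at least one stationary point (We, be, Wd, bd) of J (a point where the Fréchet derivative of J vanishes) satisfying the four identities: be = ū − We·ȳ, bd = ȳ − Wd·ū, We = We·Wd·We, and We = We·G·We. -/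

import Mathlib

open Matrix

attribute [local instance] Matrix.seminormedAddCommGroup Matrix.normedAddCommGroup
  Matrix.normedSpace

/-- Squared Frobenius norm of a real matrix: `‖X‖² = tr(Xᵀ X)`. -/
noncomputable def frobSq {k l : ℕ} (X : Matrix (Fin k) (Fin l) ℝ) : ℝ :=
  Matrix.trace (Xᵀ * X)

/-!
Centre the data, `P̄ = P - ū 𝟙ᵀ` and `Ȳ = Y - ȳ 𝟙ᵀ = G P̄`, and let `Z` be a generalized inverse of
`Ȳ` with `Ȳ Z Ȳ = Ȳ`, `Z Ȳ Z = Z` and `Z Ȳ` symmetric. The encoder `We = P̄ Z`, `be = ū - We ȳ`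
is a least-squares fit of `P` by affine functions of the data, so its residual
`E = P - We Y - be 𝟙ᵀ` is orthogonal to the rows of `Y` and to `𝟙ᵀ`; moreover
`G E = Ȳ - Ȳ Z Ȳ = 0`. With `Wd = G` and `bd = 0` the reconstruction and model-constraint residuals
both equal `G E = 0`, so `J = (α/2)‖E‖²` there, the least value `J` can take. The point is thus a
global minimizer of `J`, hence stationary, and `We G We = P̄ (Z Ȳ Z) = We`.
-/

section LeastSquaresInverse

variable {m n R : Type*} [Fintype m] [Fintype n] [Field R] [LinearOrder R] [IsStrictOrderedRing R]

theorem Matrix.range_mulVecLin_mul_transpose_self (X : Matrix m n R) :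
    LinearMap.range (X * Xᵀ).mulVecLin = LinearMap.range X.mulVecLin := by
  refine Submodule.eq_of_le_of_finrank_eq ?_ (rank_self_mul_transpose X)
  rintro _ ⟨v, rfl⟩
  exact ⟨Xᵀ *ᵥ v, by simp only [mulVecLin_apply, mulVec_mulVec]⟩

theorem Matrix.exists_mul_mul_transpose_self_eq_transpose (X : Matrix m n R) :
    ∃ Z : Matrix n m R, Z * (X * Xᵀ) = Xᵀ := by
  have hcol : ∀ j, ∃ z, (X * Xᵀ) *ᵥ z = X.col j := fun j => by
    have hj : X.col j ∈ LinearMap.range (X * Xᵀ).mulVecLin := by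
      rw [range_mulVecLin_mul_transpose_self, range_mulVecLin]
      exact Submodule.subset_span ⟨j, rfl⟩
    exact LinearMap.mem_range.1 hj
  choose z hz using hcol
  refine ⟨Matrix.of z, ?_⟩
  rw [← transpose_inj, transpose_mul, transpose_mul, transpose_transpose]
  ext i j
  exact congrFun (hz j) i

theorem Matrix.exists_leastSquares_inverse (X : Matrix m n R) :
    ∃ Z : Matrix n m R, X * Z * X = X ∧ Z * X * Z = Z ∧ (Z * X)ᵀ = Z * X := by
  obtain ⟨Z, hZ⟩ := X.exists_mul_mul_transpose_self_eq_transpose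
  have hsq : (Z * X)ᵀ = Z * X * (Z * X)ᵀ :=
    calc (Z * X)ᵀ = Z * (X * Xᵀ) * Zᵀ := by rw [hZ, transpose_mul]
      _ = Z * X * (Z * X)ᵀ := by rw [transpose_mul]; simp only [Matrix.mul_assoc]
  have hsymm : (Z * X)ᵀ = Z * X :=
    calc (Z * X)ᵀ = (Z * X * (Z * X)ᵀ)ᵀ := by
          rw [transpose_mul (Z * X), transpose_transpose, ← hsq]
      _ = Z * X := by rw [← hsq, transpose_transpose]
  have hXZX : X * Z * X = X := by
    rw [Matrix.mul_assoc, ← hsymm, ← transpose_transpose X, ← transpose_mul, transpose_transpose,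
      Matrix.mul_assoc, hZ, transpose_transpose]
  have hZXZX : Z * X * Z * X = Z * X := by
    rw [Matrix.mul_assoc Z X Z, Matrix.mul_assoc Z (X * Z) X, hXZX]
  refine ⟨Z * X * Z, ?_, ?_, ?_⟩
  · simp only [← Matrix.mul_assoc, hXZX]
  · simp only [← Matrix.mul_assoc, hZXZX]
  · rw [hZXZX, hsymm]

end LeastSquaresInverse

theorem Matrix.trace_transpose_mul_mul_add_vecMulVec_eq_zero {k l ι R : Type*} [Fintype k]
    [Fintype l] [Fintype ι] [CommRing R] {E : Matrix k ι R} {Y : Matrix l ι R} (hEY : E * Yᵀ = 0)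
    (hE1 : E *ᵥ 1 = 0) (K : Matrix k l R) (u : k → R) :
    trace (Eᵀ * (K * Y + vecMulVec u 1)) = 0 := by
  have hYE : Y * Eᵀ = 0 := by rw [← transpose_transpose Y, ← transpose_mul, hEY, transpose_zero]
  have hK : trace (Eᵀ * (K * Y)) = 0 := by
    rw [← Matrix.mul_assoc, trace_mul_comm, ← Matrix.mul_assoc, hYE, Matrix.zero_mul, trace_zero]
  have hu : trace (Eᵀ * vecMulVec u 1) = 0 := by
    rw [trace_mul_comm, vecMulVec_mul, vecMul_transpose, hE1, vecMulVec_zero, trace_zero]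
  rw [Matrix.mul_add, trace_add, hK, hu, add_zero]

theorem Matrix.sub_vecMulVec_mean_mulVec_one_eq_zero {k ι : Type*} [Fintype ι] [Nonempty ι]
    (M : Matrix k ι ℝ) : (M - vecMulVec ((Fintype.card ι : ℝ)⁻¹ • (M *ᵥ 1)) 1) *ᵥ 1 = 0 := by
  have hι : (Fintype.card ι : ℝ) ≠ 0 := Nat.cast_ne_zero.2 Fintype.card_ne_zero
  rw [sub_mulVec, vecMulVec_mulVec, sub_eq_zero]
  ext i
  simp only [one_dotProduct_one, MulOpposite.op_natCast, Pi.smul_apply, smul_eq_mul,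
    MulOpposite.smul_eq_mul_unop, MulOpposite.unop_natCast]
  field_simp

theorem Matrix.sub_mul_sub_vecMulVec_sub_mulVec {k l ι : Type*} [Fintype l] (P : Matrix k ι ℝ)
    (Y : Matrix l ι ℝ) (W : Matrix k l ℝ) (u : k → ℝ) (y : l → ℝ) :
    P - W * Y - vecMulVec (u - W *ᵥ y) 1 = (P - vecMulVec u 1) - W * (Y - vecMulVec y 1) := by
  rw [Matrix.mul_sub, mul_vecMulVec, sub_vecMulVec]
  abel

theorem exists_encoder_leastSquares {k l ι : Type*} [Fintype k] [Fintype l] [Fintype ι]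
    [Nonempty ι] {P : Matrix k ι ℝ} {G : Matrix l k ℝ} {Y : Matrix l ι ℝ} (hY : Y = G * P)
    {ubar : k → ℝ} (hubar : ubar = (Fintype.card ι : ℝ)⁻¹ • (P *ᵥ 1))
    {ybar : l → ℝ} (hybar : ybar = (Fintype.card ι : ℝ)⁻¹ • (Y *ᵥ 1)) :
    ∃ We : Matrix k l ℝ,
      (P - We * Y - vecMulVec (ubar - We *ᵥ ybar) 1) * Yᵀ = 0 ∧
      (P - We * Y - vecMulVec (ubar - We *ᵥ ybar) 1) *ᵥ 1 = 0 ∧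
      G * (P - We * Y - vecMulVec (ubar - We *ᵥ ybar) 1) = 0 ∧
      We * G * We = We := by
  set Pc := P - vecMulVec ubar 1 with hPc
  set Yc := Y - vecMulVec ybar 1 with hYc
  obtain ⟨Z, hYZY, hZYZ, hZY⟩ := Yc.exists_leastSquares_inverse
  have hPc1 : Pc *ᵥ 1 = 0 := by rw [hPc, hubar]; exact P.sub_vecMulVec_mean_mulVec_one_eq_zero
  have hYc1 : Yc *ᵥ 1 = 0 := by rw [hYc, hybar]; exact Y.sub_vecMulVec_mean_mulVec_one_eq_zero
  have hGPc : G * Pc = Yc := by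
    rw [hPc, hYc, Matrix.mul_sub, mul_vecMulVec, ← hY, hybar, hubar, hY, mulVec_smul, mulVec_mulVec]
  have hZYY : Z * Yc * Ycᵀ = Ycᵀ := by
    rw [← hZY, ← transpose_mul, ← Matrix.mul_assoc, hYZY]
  refine ⟨Pc * Z, ?_⟩
  rw [sub_mul_sub_vecMulVec_sub_mulVec]
  have hE1 : (Pc - Pc * Z * Yc) *ᵥ 1 = 0 := by
    rw [sub_mulVec, ← mulVec_mulVec, hYc1, mulVec_zero, hPc1, sub_zero]
  have hEYc : (Pc - Pc * Z * Yc) * Ycᵀ = 0 := by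
    rw [Matrix.sub_mul, Matrix.mul_assoc Pc, Matrix.mul_assoc Pc, hZYY, sub_self]
  refine ⟨?_, hE1, ?_, ?_⟩
  · have hYsplit : Yᵀ = Ycᵀ + vecMulVec 1 ybar := by
      rw [hYc, transpose_sub, transpose_vecMulVec, sub_add_cancel]
    rw [hYsplit, Matrix.mul_add, hEYc, mul_vecMulVec, hE1, zero_vecMulVec, add_zero]
  · rw [Matrix.mul_sub, ← Matrix.mul_assoc, ← Matrix.mul_assoc, hGPc, hYZY, sub_self]
  · simp only [Matrix.mul_assoc] at hZYZ ⊢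
    rw [← Matrix.mul_assoc G, hGPc, hZYZ]

section Frobenius

variable {k l : ℕ}

theorem frobSq_eq_sum (X : Matrix (Fin k) (Fin l) ℝ) : frobSq X = ∑ i, ∑ j, X i j * X i j := by
  rw [frobSq, Matrix.trace, Finset.sum_comm]
  simp [Matrix.mul_apply]

theorem frobSq_nonneg (X : Matrix (Fin k) (Fin l) ℝ) : 0 ≤ frobSq X := by
  rw [frobSq_eq_sum]
  exact Finset.sum_nonneg fun i _ => Finset.sum_nonneg fun j _ => mul_self_nonneg _

@[simp]
theorem frobSq_zero : frobSq (0 : Matrix (Fin k) (Fin l) ℝ) = 0 := by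
  simp [frobSq]

theorem frobSq_add (X D : Matrix (Fin k) (Fin l) ℝ) :
    frobSq (X + D) = frobSq X + 2 * trace (Xᵀ * D) + frobSq D := by
  have h : trace (Dᵀ * X) = trace (Xᵀ * D) := by
    rw [← trace_transpose, transpose_mul, transpose_transpose]
  simp only [frobSq, transpose_add, Matrix.add_mul, Matrix.mul_add, trace_add, h]
  ring

theorem frobSq_le_frobSq_add_of_trace_eq_zero {X D : Matrix (Fin k) (Fin l) ℝ}
    (h : trace (Xᵀ * D) = 0) : frobSq X ≤ frobSq (X + D) := by
  rw [frobSq_add, h]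
  linarith [frobSq_nonneg D]

theorem frobSq_le_frobSq_sub_mul_sub_vecMulVec {nt : ℕ} {P : Matrix (Fin k) (Fin nt) ℝ}
    {Y : Matrix (Fin l) (Fin nt) ℝ} {W₀ : Matrix (Fin k) (Fin l) ℝ} {b₀ : Fin k → ℝ}
    (hEY : (P - W₀ * Y - vecMulVec b₀ 1) * Yᵀ = 0) (hE1 : (P - W₀ * Y - vecMulVec b₀ 1) *ᵥ 1 = 0)
    (W : Matrix (Fin k) (Fin l) ℝ) (b : Fin k → ℝ) :
    frobSq (P - W₀ * Y - vecMulVec b₀ 1) ≤ frobSq (P - W * Y - vecMulVec b 1) := by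
  have hsplit : P - W * Y - vecMulVec b 1
      = (P - W₀ * Y - vecMulVec b₀ 1) + ((W₀ - W) * Y + vecMulVec (b₀ - b) 1) := by
    rw [Matrix.sub_mul, sub_vecMulVec]
    abel
  rw [hsplit]
  exact frobSq_le_frobSq_add_of_trace_eq_zero
    (trace_transpose_mul_mul_add_vecMulVec_eq_zero hEY hE1 _ _)

end Frobenius

theorem IsLocalMin.hasFDerivAt_zero {E : Type*} [NormedAddCommGroup E] [NormedSpace ℝ E]
    {f : E → ℝ} {a : E} (h : IsLocalMin f a) (hf : DifferentiableAt ℝ f a) :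
    HasFDerivAt f (0 : E →L[ℝ] ℝ) a :=
  hf.hasFDerivAt.congr_fderiv (h.hasFDerivAt_eq_zero hf.hasFDerivAt)

section McEncoder

variable {m n nt : ℕ}

noncomputable def mcEncoderLoss (P : Matrix (Fin m) (Fin nt) ℝ) (G : Matrix (Fin n) (Fin m) ℝ)
    (Y : Matrix (Fin n) (Fin nt) ℝ) (α β : ℝ)
    (w : Matrix (Fin m) (Fin n) ℝ × (Fin m → ℝ) × Matrix (Fin n) (Fin m) ℝ × (Fin n → ℝ)) : ℝ :=
  (1 / 2) * frobSq (Y - w.2.2.1 * (w.1 * Y + vecMulVec w.2.1 1) - vecMulVec w.2.2.2 1) +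
    (α / 2) * frobSq (P - w.1 * Y - vecMulVec w.2.1 1) +
    (β / 2) * frobSq (Y - G * w.1 * Y - G * vecMulVec w.2.1 1)

theorem differentiable_mcEncoderLoss (P : Matrix (Fin m) (Fin nt) ℝ)
    (G : Matrix (Fin n) (Fin m) ℝ) (Y : Matrix (Fin n) (Fin nt) ℝ) (α β : ℝ) :
    Differentiable ℝ (mcEncoderLoss P G Y α β) := by
  unfold mcEncoderLoss
  simp only [frobSq_eq_sum, Matrix.sub_apply, Matrix.add_apply, Matrix.mul_apply, vecMulVec_apply]
  fun_prop

theorem mcEncoderLoss_le {P : Matrix (Fin m) (Fin nt) ℝ} {G : Matrix (Fin n) (Fin m) ℝ}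
    {Y : Matrix (Fin n) (Fin nt) ℝ} (hY : Y = G * P) {α β : ℝ} (hα : 0 ≤ α) (hβ : 0 ≤ β)
    {We : Matrix (Fin m) (Fin n) ℝ} {be : Fin m → ℝ}
    (hEY : (P - We * Y - vecMulVec be 1) * Yᵀ = 0) (hE1 : (P - We * Y - vecMulVec be 1) *ᵥ 1 = 0)
    (hGE : G * (P - We * Y - vecMulVec be 1) = 0) (w) :
    mcEncoderLoss P G Y α β (We, be, G, 0) ≤ mcEncoderLoss P G Y α β w := by
  have hrec : Y - G * (We * Y + vecMulVec be 1) - vecMulVec 0 1 = 0 := by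
    rw [← hGE, zero_vecMulVec, sub_zero, Matrix.mul_sub, Matrix.mul_sub, ← hY, Matrix.mul_add]
    abel
  have hcon : Y - G * We * Y - G * vecMulVec be 1 = 0 := by
    rw [← hGE, Matrix.mul_sub, Matrix.mul_sub, ← hY, Matrix.mul_assoc]
  have hls := frobSq_le_frobSq_sub_mul_sub_vecMulVec hEY hE1 w.1 w.2.1
  simp only [mcEncoderLoss, hrec, hcon, frobSq_zero]
  nlinarith [frobSq_nonneg (Y - w.2.2.1 * (w.1 * Y + vecMulVec w.2.1 1) - vecMulVec w.2.2.2 1),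
    frobSq_nonneg (Y - G * w.1 * Y - G * vecMulVec w.2.1 1)]

end McEncoder

theorem mcEncoder_exists_stationary_point_general
    {m n nt : ℕ} (hnt : 0 < nt)
    (P : Matrix (Fin m) (Fin nt) ℝ) (G : Matrix (Fin n) (Fin m) ℝ)
    (Y : Matrix (Fin n) (Fin nt) ℝ) (hY : Y = G * P)
    (α β : ℝ) (hα : 0 < α) (hβ : 0 < β)
    (ubar : Fin m → ℝ) (hubar : ubar = (nt : ℝ)⁻¹ • (P *ᵥ 1))
    (ybar : Fin n → ℝ) (hybar : ybar = (nt : ℝ)⁻¹ • (Y *ᵥ 1))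
    (J : Matrix (Fin m) (Fin n) ℝ × (Fin m → ℝ) ×
         Matrix (Fin n) (Fin m) ℝ × (Fin n → ℝ) → ℝ)
    (hJ : ∀ We be Wd bd, J (We, be, Wd, bd) =
      (1 / 2) * frobSq (Y - Wd * (We * Y + vecMulVec be 1) - vecMulVec bd 1) +
      (α / 2) * frobSq (P - We * Y - vecMulVec be 1) +
      (β / 2) * frobSq (Y - G * We * Y - G * vecMulVec be 1)) :
    ∃ (We : Matrix (Fin m) (Fin n) ℝ) (be : Fin m → ℝ)
      (Wd : Matrix (Fin n) (Fin m) ℝ) (bd : Fin n → ℝ),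
      HasFDerivAt J (0 : _ →L[ℝ] ℝ) (We, be, Wd, bd) ∧
      be = ubar - We *ᵥ ybar ∧
      bd = ybar - Wd *ᵥ ubar ∧
      We = We * Wd * We ∧
      We = We * G * We := by
  have : Nonempty (Fin nt) := ⟨⟨0, hnt⟩⟩
  obtain ⟨We, hEY, hE1, hGE, hWGW⟩ := exists_encoder_leastSquares hY
    (by rwa [Fintype.card_fin] : ubar = _) (by rwa [Fintype.card_fin] : ybar = _)
  obtain rfl : J = mcEncoderLoss P G Y α β := funext fun w => hJ w.1 w.2.1 w.2.2.1 w.2.2.2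
  have hmin : IsLocalMin (mcEncoderLoss P G Y α β) (We, ubar - We *ᵥ ybar, G, 0) :=
    Filter.Eventually.of_forall (mcEncoderLoss_le hY hα.le hβ.le hEY hE1 hGE)
  have hyG : ybar = G *ᵥ ubar := by rw [hybar, hubar, hY, mulVec_smul, mulVec_mulVec]
  refine ⟨We, _, G, 0, ?_, rfl, by rw [hyG, sub_self], hWGW.symm, hWGW.symm⟩
  exact hmin.hasFDerivAt_zero (differentiable_mcEncoderLoss P G Y α β _)

/-- For noiseless data `Y = G P`, there exists at least one stationary point
of the mcEncoder loss satisfying the four identities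
`be = ū − We ȳ`, `bd = ȳ − Wd ū`, `We = We Wd We`, `We = We G We`. -/
theorem mcEncoder_exists_stationary_point
    {m n nt : ℕ} (hm : 0 < m) (hn : 0 < n) (hnt : 0 < nt)
    (P : Matrix (Fin m) (Fin nt) ℝ) (G : Matrix (Fin n) (Fin m) ℝ)
    (Y : Matrix (Fin n) (Fin nt) ℝ) (hY : Y = G * P)
    (α β : ℝ) (hα : 0 < α) (hβ : 0 < β)
    (ubar : Fin m → ℝ) (hubar : ubar = (nt : ℝ)⁻¹ • (P *ᵥ 1))
    (ybar : Fin n → ℝ) (hybar : ybar = (nt : ℝ)⁻¹ • (Y *ᵥ 1))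
    (J : Matrix (Fin m) (Fin n) ℝ × (Fin m → ℝ) ×
         Matrix (Fin n) (Fin m) ℝ × (Fin n → ℝ) → ℝ)
    (hJ : ∀ We be Wd bd, J (We, be, Wd, bd) =
      (1 / 2) * frobSq (Y - Wd * (We * Y + vecMulVec be 1) - vecMulVec bd 1) +
      (α / 2) * frobSq (P - We * Y - vecMulVec be 1) +
      (β / 2) * frobSq (Y - G * We * Y - G * vecMulVec be 1)) :
    ∃ (We : Matrix (Fin m) (Fin n) ℝ) (be : Fin m → ℝ)
      (Wd : Matrix (Fin n) (Fin m) ℝ) (bd : Fin n → ℝ),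
      HasFDerivAt J (0 : _ →L[ℝ] ℝ) (We, be, Wd, bd) ∧
      be = ubar - We *ᵥ ybar ∧
      bd = ybar - Wd *ᵥ ubar ∧
      We = We * Wd * We ∧
      We = We * G * We :=
  mcEncoder_exists_stationary_point_general hnt P G Y hY α β hα hβ ubar hubar ybar hybar J hJ
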